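/- The class of visibly pushdown languages over a fixed pushdown alphabet partition (Σ_call, Σ_int, Σ_ret) is closed under intersection: if L1 and L2 are accepted by VPAs over the same partition, then L1 ∩ L2 is accepted by a VPA (the product automaton) over the same partition. -/
import Mathlib


/-- A (nondeterministic) visibly pushdown automaton over the pushdown alphabet
partition (C, I, R) of call, internal and return symbols, with stack alphabet Γ
and states Q. Call symbols always push one stack symbol, return symbols always
pop one, internal symbols leave the stack unchanged. -/
structure VPA (C I R Γ Q : Type*) where
  init : Q
  final : Set Q
  callT : Q → C → Set (Q × Γ)
  intT : Q → I → Set Q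
  retT : Q → Γ → R → Set Q

/-- A run of a VPA: `Run A q s w q' s'` means that reading the word w from state q with
stack s can lead to state q' with stack s'. -/
inductive VPA.Run {C I R Γ Q : Type*} (A : VPA C I R Γ Q) :
    Q → List Γ → List (C ⊕ I ⊕ R) → Q → List Γ → Prop where
  | nil (q : Q) (s : List Γ) : Run A q s [] q s
  | call {q q' q'' : Q} {s s'' : List Γ} {γ : Γ} {c : C} {w : List (C ⊕ I ⊕ R)} :
      (q', γ) ∈ A.callT q c → Run A q' (γ :: s) w q'' s'' →
      Run A q s (Sum.inl c :: w) q'' s''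
  | intl {q q' q'' : Q} {s s'' : List Γ} {a : I} {w : List (C ⊕ I ⊕ R)} :
      q' ∈ A.intT q a → Run A q' s w q'' s'' →
      Run A q s (Sum.inr (Sum.inl a) :: w) q'' s''
  | ret {q q' q'' : Q} {s s'' : List Γ} {γ : Γ} {r : R} {w : List (C ⊕ I ⊕ R)} :
      q' ∈ A.retT q γ r → Run A q' s w q'' s'' →
      Run A q (γ :: s) (Sum.inr (Sum.inr r) :: w) q'' s''

/-- A word is accepted if some run from the initial state with empty stack ends
in a final state. -/
def VPA.Accepts {C I R Γ Q : Type*} (A : VPA C I R Γ Q) (w : List (C ⊕ I ⊕ R)) : Prop :=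
  ∃ (q : Q) (s : List Γ), A.Run A.init [] w q s ∧ q ∈ A.final


section Product
variable {C I R Γ₁ Γ₂ Q₁ Q₂ : Type*} (A₁ : VPA C I R Γ₁ Q₁) (A₂ : VPA C I R Γ₂ Q₂)

/-- The product automaton. -/
def VPA.prod : VPA C I R (Γ₁ × Γ₂) (Q₁ × Q₂) where
  init := (A₁.init, A₂.init)
  final := {p | p.1 ∈ A₁.final ∧ p.2 ∈ A₂.final}
  callT := fun q c => {p | (p.1.1, p.2.1) ∈ A₁.callT q.1 c ∧ (p.1.2, p.2.2) ∈ A₂.callT q.2 c}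
  intT := fun q a => {p | p.1 ∈ A₁.intT q.1 a ∧ p.2 ∈ A₂.intT q.2 a}
  retT := fun q γ r => {p | p.1 ∈ A₁.retT q.1 γ.1 r ∧ p.2 ∈ A₂.retT q.2 γ.2 r}

lemma VPA.prod_run_proj {q q' : Q₁ × Q₂} {s s' : List (Γ₁ × Γ₂)} {w : List (C ⊕ I ⊕ R)}
    (h : (A₁.prod A₂).Run q s w q' s') :
    A₁.Run q.1 (s.map Prod.fst) w q'.1 (s'.map Prod.fst) ∧
    A₂.Run q.2 (s.map Prod.snd) w q'.2 (s'.map Prod.snd) := by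
  induction h with
  | nil => exact ⟨.nil _ _, .nil _ _⟩
  | call h _ ih => exact ⟨.call h.1 ih.1, .call h.2 ih.2⟩
  | intl h _ ih => exact ⟨.intl h.1 ih.1, .intl h.2 ih.2⟩
  | ret h _ ih => exact ⟨.ret h.1 ih.1, .ret h.2 ih.2⟩

lemma VPA.prod_run_combine {q₁ q₁' : Q₁} {q₂ q₂' : Q₂} {s : List (Γ₁ × Γ₂)}
    {s₁' : List Γ₁} {s₂' : List Γ₂} {w : List (C ⊕ I ⊕ R)}
    (h₁ : A₁.Run q₁ (s.map Prod.fst) w q₁' s₁')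
    (h₂ : A₂.Run q₂ (s.map Prod.snd) w q₂' s₂') :
    ∃ s' : List (Γ₁ × Γ₂), (A₁.prod A₂).Run (q₁, q₂) s w (q₁', q₂') s' ∧
      s₁' = s'.map Prod.fst ∧ s₂' = s'.map Prod.snd := by
  induction w generalizing q₁ q₂ s with
  | nil =>
    generalize hs1 : s.map Prod.fst = t₁ at h₁
    generalize hs2 : s.map Prod.snd = t₂ at h₂
    cases h₁; cases h₂
    subst hs1 hs2
    exact ⟨s, .nil _ _, rfl, rfl⟩
  | cons x w ih =>
    generalize hs1 : s.map Prod.fst = t₁ at h₁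
    generalize hs2 : s.map Prod.snd = t₂ at h₂
    cases x with
    | inl c =>
      cases h₁ with | call hc₁ hr₁ =>
      cases h₂ with | call hc₂ hr₂ =>
      rename_i p₁ γ₁ p₂ γ₂
      subst hs1 hs2
      obtain ⟨s', hrun, h1, h2⟩ := ih (s := (γ₁, γ₂) :: s) hr₁ hr₂
      exact ⟨s', .call (q' := (p₁, p₂)) (γ := (γ₁, γ₂)) ⟨hc₁, hc₂⟩ hrun, h1, h2⟩
    | inr x =>
      cases x with
      | inl a =>
        cases h₁ with | intl hc₁ hr₁ =>
        cases h₂ with | intl hc₂ hr₂ =>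
        subst hs1 hs2
        obtain ⟨s', hrun, h1, h2⟩ := ih hr₁ hr₂
        exact ⟨s', .intl ⟨hc₁, hc₂⟩ hrun, h1, h2⟩
      | inr r =>
        cases h₁ with | ret hc₁ hr₁ =>
        cases h₂ with | ret hc₂ hr₂ =>
        cases s with
        | nil => simp at hs1
        | cons γ t =>
          simp only [List.map_cons, List.cons.injEq] at hs1 hs2
          obtain ⟨e1, e1'⟩ := hs1; obtain ⟨e2, e2'⟩ := hs2
          subst e1 e1' e2 e2'
          obtain ⟨s', hrun, h1, h2⟩ := ih hr₁ hr₂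
          exact ⟨s', .ret ⟨hc₁, hc₂⟩ hrun, h1, h2⟩

end Product

/-- Closure of visibly pushdown languages under intersection: the product automaton,
with componentwise pairs of states and stack symbols, accepts L₁ ∩ L₂. -/
theorem vpl_closed_under_intersection {C I R Γ₁ Γ₂ Q₁ Q₂ : Type*}
    (A₁ : VPA C I R Γ₁ Q₁) (A₂ : VPA C I R Γ₂ Q₂) :
    ∃ B : VPA C I R (Γ₁ × Γ₂) (Q₁ × Q₂),
      ∀ w : List (C ⊕ I ⊕ R), B.Accepts w ↔ A₁.Accepts w ∧ A₂.Accepts w := by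
  refine ⟨A₁.prod A₂, fun w => ⟨?_, ?_⟩⟩
  · rintro ⟨q, s, hrun, hf⟩
    obtain ⟨h1, h2⟩ := VPA.prod_run_proj A₁ A₂ hrun
    exact ⟨⟨q.1, _, h1, hf.1⟩, ⟨q.2, _, h2, hf.2⟩⟩
  · rintro ⟨⟨q₁, s₁, h₁, hf₁⟩, ⟨q₂, s₂, h₂, hf₂⟩⟩
    obtain ⟨s', hrun, h1, h2⟩ := VPA.prod_run_combine A₁ A₂ (s := []) h₁ h₂
    exact ⟨(q₁, q₂), s', hrun, hf₁, hf₂⟩
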